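/- For every integer n ≥ 2, the ladder L_n admits a super vertex-antimagic total labeling, i.e. a bijection f : V(L_n) ∪ E(L_n) → {1,...,5n−2} with f(V(L_n))={1,...,2n} such that all vertex-weights f(v)+Σ_{u∈N(v)} f(uv) are pairwise distinct. -/
import Mathlib


open Sum

/-- The weight of an edge `e` under a total labeling `f` of the graph `G`:
the label of `e` plus the labels of its two endpoints. -/
noncomputable def edgeWt {V : Type*} (G : SimpleGraph V) (f : V ⊕ G.edgeSet → ℕ)
    (e : G.edgeSet) : ℕ :=
  f (inr e) + ∑ᶠ (v : V) (_ : v ∈ (e : Sym2 V)), f (inl v)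

/-- The weight of a vertex `v` under a total labeling `f` of the graph `G`:
the label of `v` plus the labels of all edges incident with `v`. -/
noncomputable def vertexWt {V : Type*} (G : SimpleGraph V) (f : V ⊕ G.edgeSet → ℕ)
    (v : V) : ℕ :=
  f (inl v) + ∑ᶠ (e : G.edgeSet) (_ : v ∈ (e : Sym2 V)), f (inr e)

/-- The ladder `L_n = P_n × P_2`, with vertices `u_i = inl i` and `v_i = inr i`
(`i` running over `Fin n`), edges `u_i u_{i+1}`, `v_i v_{i+1}` and rungs `u_i v_i`. -/
def ladder (n : ℕ) : SimpleGraph (Fin n ⊕ Fin n) :=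
  SimpleGraph.fromRel (fun a b =>
    (∃ p q : Fin n, (p : ℕ) + 1 = (q : ℕ) ∧ a = inl p ∧ b = inl q) ∨
    (∃ p q : Fin n, (p : ℕ) + 1 = (q : ℕ) ∧ a = inr p ∧ b = inr q) ∨
    (∃ p : Fin n, a = inl p ∧ b = inr p))

instance ladderDecAdj (n : ℕ) : DecidableRel (ladder n).Adj := fun a b =>
  decidable_of_iff _ (SimpleGraph.fromRel_adj _ a b).symm

noncomputable example (n : ℕ) : Fintype (ladder n).edgeSet := by infer_instance

def elabfun (n : ℕ) : (Fin n ⊕ Fin n) → (Fin n ⊕ Fin n) → ℕ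
| inl p, inl q => 3*n + p + q
| inr p, inr q => 3*n + 1 + p + q
| inl p, inr _ => 3*n - p
| inr _, inl q => 3*n - q

def elab' (n : ℕ) : Sym2 (Fin n ⊕ Fin n) → ℕ := Sym2.lift ⟨elabfun n, by
  intro a b; cases a <;> cases b <;> simp [elabfun] <;> ring⟩

lemma mem_ladder_edgeSet (n : ℕ) (s : Sym2 (Fin n ⊕ Fin n)) :
    s ∈ (ladder n).edgeSet ↔
      (∃ i : ℕ, ∃ h : i + 1 < n,
        s = s(inl ⟨i, Nat.lt_of_succ_lt h⟩, inl ⟨i+1, h⟩)) ∨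
      (∃ i : ℕ, ∃ h : i + 1 < n,
        s = s(inr ⟨i, Nat.lt_of_succ_lt h⟩, inr ⟨i+1, h⟩)) ∨
      (∃ i : ℕ, ∃ h : i < n, s = s(inl ⟨i, h⟩, inr ⟨i, h⟩)) := by
  induction s using Sym2.ind with
  | _ a b =>
    rw [SimpleGraph.mem_edgeSet]
    constructor
    · intro hadj
      rw [ladder, SimpleGraph.fromRel_adj] at hadj
      obtain ⟨-, h | h⟩ := hadj
      · rcases h with ⟨p, q, hpq, rfl, rfl⟩ | ⟨p, q, hpq, rfl, rfl⟩ | ⟨p, rfl, rfl⟩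
        · exact Or.inl ⟨p, hpq ▸ q.isLt, by rw [Sym2.eq_iff]; left; constructor <;> simp [Fin.ext_iff] <;> omega⟩
        · exact Or.inr (Or.inl ⟨p, hpq ▸ q.isLt, by rw [Sym2.eq_iff]; left; constructor <;> simp [Fin.ext_iff] <;> omega⟩)
        · exact Or.inr (Or.inr ⟨p, p.isLt, by rw [Sym2.eq_iff]; left; constructor <;> congr⟩)
      · rcases h with ⟨p, q, hpq, rfl, rfl⟩ | ⟨p, q, hpq, rfl, rfl⟩ | ⟨p, rfl, rfl⟩
        · exact Or.inl ⟨p, hpq ▸ q.isLt, by rw [Sym2.eq_iff]; right; constructor <;> simp [Fin.ext_iff] <;> omega⟩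
        · exact Or.inr (Or.inl ⟨p, hpq ▸ q.isLt, by rw [Sym2.eq_iff]; right; constructor <;> simp [Fin.ext_iff] <;> omega⟩)
        · exact Or.inr (Or.inr ⟨p, p.isLt, by rw [Sym2.eq_iff]; right; constructor <;> congr⟩)
    · intro h
      rw [ladder, SimpleGraph.fromRel_adj]
      rcases h with ⟨i, h, hs⟩ | ⟨i, h, hs⟩ | ⟨i, h, hs⟩ <;>
        rw [Sym2.eq_iff] at hs <;>
        rcases hs with ⟨rfl, rfl⟩ | ⟨rfl, rfl⟩
      · exact ⟨by simp [Fin.ext_iff], Or.inl (Or.inl ⟨_, _, rfl, rfl, rfl⟩)⟩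
      · exact ⟨by simp [Fin.ext_iff], Or.inr (Or.inl ⟨_, _, rfl, rfl, rfl⟩)⟩
      · exact ⟨by simp [Fin.ext_iff], Or.inl (Or.inr (Or.inl ⟨_, _, rfl, rfl, rfl⟩))⟩
      · exact ⟨by simp [Fin.ext_iff], Or.inr (Or.inr (Or.inl ⟨_, _, rfl, rfl, rfl⟩))⟩
      · exact ⟨by simp, Or.inl (Or.inr (Or.inr ⟨_, rfl, rfl⟩))⟩
      · exact ⟨by simp, Or.inr (Or.inr (Or.inr ⟨_, rfl, rfl⟩))⟩

def lab (n : ℕ) : (Fin n ⊕ Fin n) → ℕ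
| inl i => 2*(i : ℕ)+1
| inr i => 2*(i : ℕ)+2

def F (n : ℕ) : (Fin n ⊕ Fin n) ⊕ (ladder n).edgeSet → ℕ
| inl v => lab n v
| inr e => elab' n (e : Sym2 (Fin n ⊕ Fin n))

lemma vertexWt_F (n : ℕ) (v : Fin n ⊕ Fin n) :
    vertexWt (ladder n) (F n) v =
      lab n v + ∑ e ∈ Finset.univ.filter
        (fun e : (ladder n).edgeSet => v ∈ (e : Sym2 (Fin n ⊕ Fin n))),
        elab' n (e : Sym2 (Fin n ⊕ Fin n)) := by
  unfold vertexWt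
  congr 1
  have h1 : ∀ e : (ladder n).edgeSet,
      (∑ᶠ _ : v ∈ (e : Sym2 (Fin n ⊕ Fin n)), F n (inr e)) =
      if v ∈ (e : Sym2 (Fin n ⊕ Fin n)) then elab' n (e : Sym2 (Fin n ⊕ Fin n)) else 0 :=
    fun e => finsum_eq_if
  rw [finsum_congr h1, finsum_eq_sum_of_fintype, Finset.sum_filter]

def EX (n i : ℕ) (h : i+1 < n) : (ladder n).edgeSet :=
  ⟨s(inl ⟨i, Nat.lt_of_succ_lt h⟩, inl ⟨i+1, h⟩),
    (mem_ladder_edgeSet n _).2 (Or.inl ⟨i, h, rfl⟩)⟩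

def EY (n i : ℕ) (h : i+1 < n) : (ladder n).edgeSet :=
  ⟨s(inr ⟨i, Nat.lt_of_succ_lt h⟩, inr ⟨i+1, h⟩),
    (mem_ladder_edgeSet n _).2 (Or.inr (Or.inl ⟨i, h, rfl⟩))⟩

def ER (n i : ℕ) (h : i < n) : (ladder n).edgeSet :=
  ⟨s(inl ⟨i, h⟩, inr ⟨i, h⟩),
    (mem_ladder_edgeSet n _).2 (Or.inr (Or.inr ⟨i, h, rfl⟩))⟩

lemma elab_EX (n i : ℕ) (h : i+1 < n) : elab' n (EX n i h : Sym2 _) = 3*n+2*i+1 := by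
  show elab' n s(_, _) = _
  simp [elab', elabfun]; omega

lemma elab_EY (n i : ℕ) (h : i+1 < n) : elab' n (EY n i h : Sym2 _) = 3*n+2*i+2 := by
  show elab' n s(_, _) = _
  simp [elab', elabfun]; omega

lemma elab_ER (n i : ℕ) (h : i < n) : elab' n (ER n i h : Sym2 _) = 3*n-i := by
  show elab' n s(_, _) = _
  simp [elab', elabfun]

lemma incident_u (n i : ℕ) (hi : i < n) (e : (ladder n).edgeSet) :
    (inl ⟨i, hi⟩ ∈ (e : Sym2 (Fin n ⊕ Fin n))) ↔
      (∃ h : i + 1 < n, e = EX n i h) ∨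
      (∃ h : 1 ≤ i, e = EX n (i-1) (by omega)) ∨ e = ER n i hi := by
  obtain ⟨s, hs⟩ := e
  rw [mem_ladder_edgeSet] at hs
  simp only [Subtype.mk.injEq, EX, ER]
  rcases hs with ⟨j, h, rfl⟩ | ⟨j, h, rfl⟩ | ⟨j, h, rfl⟩ <;>
    simp only [Sym2.mem_iff, Sym2.eq_iff, inl.injEq, inr.injEq, Fin.mk.injEq,
      reduceCtorEq, or_false, false_or, and_false, false_and, and_true, true_and,
      exists_prop, exists_false] <;>
    omega

lemma incident_v (n i : ℕ) (hi : i < n) (e : (ladder n).edgeSet) :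
    (inr ⟨i, hi⟩ ∈ (e : Sym2 (Fin n ⊕ Fin n))) ↔
      (∃ h : i + 1 < n, e = EY n i h) ∨
      (∃ h : 1 ≤ i, e = EY n (i-1) (by omega)) ∨ e = ER n i hi := by
  obtain ⟨s, hs⟩ := e
  rw [mem_ladder_edgeSet] at hs
  simp only [Subtype.mk.injEq, EY, ER]
  rcases hs with ⟨j, h, rfl⟩ | ⟨j, h, rfl⟩ | ⟨j, h, rfl⟩ <;>
    simp only [Sym2.mem_iff, Sym2.eq_iff, inl.injEq, inr.injEq, Fin.mk.injEq,
      reduceCtorEq, or_false, false_or, and_false, false_and, and_true, true_and,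
      exists_prop, exists_false] <;>
    omega

lemma EX_ne_ER (n i j : ℕ) (h : i+1 < n) (h' : j < n) : EX n i h ≠ ER n j h' := by
  simp only [EX, ER, ne_eq, Subtype.mk.injEq, Sym2.eq_iff, inl.injEq, inr.injEq,
    Fin.mk.injEq, reduceCtorEq, and_false, false_and, or_self, not_false_eq_true]

lemma EY_ne_ER (n i j : ℕ) (h : i+1 < n) (h' : j < n) : EY n i h ≠ ER n j h' := by
  simp only [EY, ER, ne_eq, Subtype.mk.injEq, Sym2.eq_iff, inl.injEq, inr.injEq,
    Fin.mk.injEq, reduceCtorEq, and_false, false_and, or_self, not_false_eq_true]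

lemma EX_ne_EX (n i j : ℕ) (h : i+1 < n) (h' : j+1 < n) (hij : i ≠ j) :
    EX n i h ≠ EX n j h' := by
  simp only [EX, ne_eq, Subtype.mk.injEq, Sym2.eq_iff, inl.injEq, Fin.mk.injEq]
  omega

lemma EY_ne_EY (n i j : ℕ) (h : i+1 < n) (h' : j+1 < n) (hij : i ≠ j) :
    EY n i h ≠ EY n j h' := by
  simp only [EY, ne_eq, Subtype.mk.injEq, Sym2.eq_iff, inr.injEq, Fin.mk.injEq]
  omega

lemma wt_u (n i : ℕ) (hn : 2 ≤ n) (hi : i < n) :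
    vertexWt (ladder n) (F n) (inl ⟨i, hi⟩) =
      if i = 0 then 6*n+2 else if i = n-1 then 9*n-3 else 9*n+1+5*i := by
  rw [vertexWt_F]
  rcases Nat.lt_or_ge (i+1) n with h1 | h1
  · rcases Nat.eq_zero_or_pos i with rfl | h0
    · -- i = 0 : {EX 0, ER 0}
      have hset : Finset.univ.filter
          (fun e : (ladder n).edgeSet => inl ⟨0, hi⟩ ∈ (e : Sym2 (Fin n ⊕ Fin n)))
          = {EX n 0 h1, ER n 0 hi} := by
        ext e
        simp only [Finset.mem_filter, Finset.mem_univ, true_and, incident_u n 0 hi e,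
          Finset.mem_insert, Finset.mem_singleton]
        constructor
        · rintro (⟨h, rfl⟩ | ⟨h, rfl⟩ | rfl) <;> first | omega | tauto
        · rintro (rfl | rfl)
          · exact Or.inl ⟨h1, rfl⟩
          · exact Or.inr (Or.inr rfl)
      rw [hset, Finset.sum_insert (by simp [EX_ne_ER]), Finset.sum_singleton,
        elab_EX, elab_ER, lab]
      simp; omega
    · -- interior
      have hset : Finset.univ.filter
          (fun e : (ladder n).edgeSet => inl ⟨i, hi⟩ ∈ (e : Sym2 (Fin n ⊕ Fin n)))
          = {EX n (i-1) (by omega), EX n i h1, ER n i hi} := by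
        ext e
        simp only [Finset.mem_filter, Finset.mem_univ, true_and, incident_u n i hi e,
          Finset.mem_insert, Finset.mem_singleton]
        constructor
        · rintro (⟨h, rfl⟩ | ⟨h, rfl⟩ | rfl) <;> tauto
        · rintro (rfl | rfl | rfl)
          · exact Or.inr (Or.inl ⟨h0, rfl⟩)
          · exact Or.inl ⟨h1, rfl⟩
          · exact Or.inr (Or.inr rfl)
      rw [hset, Finset.sum_insert (by simp [EX_ne_ER, EX_ne_EX n (i-1) i (by omega) h1 (by omega)]),
        Finset.sum_insert (by simp [EX_ne_ER]), Finset.sum_singleton,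
        elab_EX, elab_EX, elab_ER, lab]
      rw [if_neg (by omega), if_neg (by omega)]
      simp; omega
  · -- i = n-1
    have hset : Finset.univ.filter
        (fun e : (ladder n).edgeSet => inl ⟨i, hi⟩ ∈ (e : Sym2 (Fin n ⊕ Fin n)))
        = {EX n (i-1) (by omega), ER n i hi} := by
      ext e
      simp only [Finset.mem_filter, Finset.mem_univ, true_and, incident_u n i hi e,
        Finset.mem_insert, Finset.mem_singleton]
      constructor
      · rintro (⟨h, rfl⟩ | ⟨h, rfl⟩ | rfl) <;> first | omega | tauto
      · rintro (rfl | rfl)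
        · exact Or.inr (Or.inl ⟨by omega, rfl⟩)
        · exact Or.inr (Or.inr rfl)
    rw [hset, Finset.sum_insert (by simp [EX_ne_ER]), Finset.sum_singleton,
      elab_EX, elab_ER, lab]
    rw [if_neg (by omega), if_pos (by omega)]
    simp; omega

lemma wt_v (n i : ℕ) (hn : 2 ≤ n) (hi : i < n) :
    vertexWt (ladder n) (F n) (inr ⟨i, hi⟩) =
      if i = 0 then 6*n+4 else if i = n-1 then 9*n-1 else 9*n+4+5*i := by
  rw [vertexWt_F]
  rcases Nat.lt_or_ge (i+1) n with h1 | h1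
  · rcases Nat.eq_zero_or_pos i with rfl | h0
    · have hset : Finset.univ.filter
          (fun e : (ladder n).edgeSet => inr ⟨0, hi⟩ ∈ (e : Sym2 (Fin n ⊕ Fin n)))
          = {EY n 0 h1, ER n 0 hi} := by
        ext e
        simp only [Finset.mem_filter, Finset.mem_univ, true_and, incident_v n 0 hi e,
          Finset.mem_insert, Finset.mem_singleton]
        constructor
        · rintro (⟨h, rfl⟩ | ⟨h, rfl⟩ | rfl) <;> first | omega | tauto
        · rintro (rfl | rfl)
          · exact Or.inl ⟨h1, rfl⟩
          · exact Or.inr (Or.inr rfl)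
      rw [hset, Finset.sum_insert (by simp [EY_ne_ER]), Finset.sum_singleton,
        elab_EY, elab_ER, lab]
      simp; omega
    · have hset : Finset.univ.filter
          (fun e : (ladder n).edgeSet => inr ⟨i, hi⟩ ∈ (e : Sym2 (Fin n ⊕ Fin n)))
          = {EY n (i-1) (by omega), EY n i h1, ER n i hi} := by
        ext e
        simp only [Finset.mem_filter, Finset.mem_univ, true_and, incident_v n i hi e,
          Finset.mem_insert, Finset.mem_singleton]
        constructor
        · rintro (⟨h, rfl⟩ | ⟨h, rfl⟩ | rfl) <;> tauto
        · rintro (rfl | rfl | rfl)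
          · exact Or.inr (Or.inl ⟨h0, rfl⟩)
          · exact Or.inl ⟨h1, rfl⟩
          · exact Or.inr (Or.inr rfl)
      rw [hset, Finset.sum_insert (by simp [EY_ne_ER, EY_ne_EY n (i-1) i (by omega) h1 (by omega)]),
        Finset.sum_insert (by simp [EY_ne_ER]), Finset.sum_singleton,
        elab_EY, elab_EY, elab_ER, lab]
      rw [if_neg (by omega), if_neg (by omega)]
      simp; omega
  · have hset : Finset.univ.filter
        (fun e : (ladder n).edgeSet => inr ⟨i, hi⟩ ∈ (e : Sym2 (Fin n ⊕ Fin n)))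
        = {EY n (i-1) (by omega), ER n i hi} := by
      ext e
      simp only [Finset.mem_filter, Finset.mem_univ, true_and, incident_v n i hi e,
        Finset.mem_insert, Finset.mem_singleton]
      constructor
      · rintro (⟨h, rfl⟩ | ⟨h, rfl⟩ | rfl) <;> first | omega | tauto
      · rintro (rfl | rfl)
        · exact Or.inr (Or.inl ⟨by omega, rfl⟩)
        · exact Or.inr (Or.inr rfl)
    rw [hset, Finset.sum_insert (by simp [EY_ne_ER]), Finset.sum_singleton,
      elab_EY, elab_ER, lab]
    rw [if_neg (by omega), if_pos (by omega)]
    simp; omega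

lemma wt_inj (n : ℕ) (hn : 2 ≤ n) : Function.Injective (vertexWt (ladder n) (F n)) := by
  rintro (⟨i, hi⟩ | ⟨i, hi⟩) (⟨j, hj⟩ | ⟨j, hj⟩) h
  · rw [wt_u n i hn hi, wt_u n j hn hj] at h
    have : i = j := by split_ifs at h <;> omega
    subst this; rfl
  · rw [wt_u n i hn hi, wt_v n j hn hj] at h
    exfalso; split_ifs at h <;> omega
  · rw [wt_v n i hn hi, wt_u n j hn hj] at h
    exfalso; split_ifs at h <;> omega
  · rw [wt_v n i hn hi, wt_v n j hn hj] at h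
    have : i = j := by split_ifs at h <;> omega
    subst this; rfl

lemma elab_bounds (n : ℕ) (hn : 2 ≤ n) (e : (ladder n).edgeSet) :
    2*n+1 ≤ elab' n (e : Sym2 (Fin n ⊕ Fin n)) ∧
      elab' n (e : Sym2 (Fin n ⊕ Fin n)) ≤ 5*n-2 := by
  obtain ⟨s, hs⟩ := e
  rw [mem_ladder_edgeSet] at hs
  rcases hs with ⟨j, h, rfl⟩ | ⟨j, h, rfl⟩ | ⟨j, h, rfl⟩ <;>
    simp only [elab', elabfun, Sym2.lift_mk] <;> omega

lemma elab_inj (n : ℕ) (hn : 2 ≤ n) (e₁ e₂ : (ladder n).edgeSet)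
    (h : elab' n (e₁ : Sym2 (Fin n ⊕ Fin n)) = elab' n (e₂ : Sym2 (Fin n ⊕ Fin n))) :
    e₁ = e₂ := by
  obtain ⟨s₁, hs₁⟩ := e₁
  obtain ⟨s₂, hs₂⟩ := e₂
  rw [mem_ladder_edgeSet] at hs₁ hs₂
  apply Subtype.ext
  show s₁ = s₂
  rcases hs₁ with ⟨i, h₁, rfl⟩ | ⟨i, h₁, rfl⟩ | ⟨i, h₁, rfl⟩ <;>
    rcases hs₂ with ⟨j, h₂, rfl⟩ | ⟨j, h₂, rfl⟩ | ⟨j, h₂, rfl⟩ <;>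
    simp only [elab', elabfun, Sym2.lift_mk] at h <;>
    [skip; omega; omega; omega; skip; omega; omega; omega; skip] <;>
    · have : i = j := by omega
      subst this; rfl

lemma lab_bounds (n : ℕ) (v : Fin n ⊕ Fin n) : 1 ≤ lab n v ∧ lab n v ≤ 2*n := by
  rcases v with ⟨i, hi⟩ | ⟨i, hi⟩ <;> simp only [lab] <;> omega

lemma lab_inj (n : ℕ) (v w : Fin n ⊕ Fin n) (h : lab n v = lab n w) : v = w := by
  rcases v with ⟨i, hi⟩ | ⟨i, hi⟩ <;> rcases w with ⟨j, hj⟩ | ⟨j, hj⟩ <;>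
    simp only [lab] at h
  · have : i = j := by omega
    subst this; rfl
  · omega
  · omega
  · have : i = j := by omega
    subst this; rfl

lemma lab_surj (n : ℕ) (m : ℕ) (h1 : 1 ≤ m) (h2 : m ≤ 2*n) :
    ∃ v : Fin n ⊕ Fin n, lab n v = m := by
  rcases Nat.even_or_odd m with he | ho
  · rw [Nat.even_iff] at he
    exact ⟨inr ⟨m/2 - 1, by omega⟩, by simp only [lab]; omega⟩
  · rw [Nat.odd_iff] at ho
    exact ⟨inl ⟨(m-1)/2, by omega⟩, by simp only [lab]; omega⟩

lemma elab_surj (n : ℕ) (hn : 2 ≤ n) (m : ℕ) (h1 : 2*n+1 ≤ m) (h2 : m ≤ 5*n-2) :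
    ∃ e : (ladder n).edgeSet, elab' n (e : Sym2 (Fin n ⊕ Fin n)) = m := by
  rcases Nat.lt_or_ge (3*n) m with h3 | h3
  · rcases Nat.even_or_odd (m - 3*n) with he | ho
    · rw [Nat.even_iff] at he
      exact ⟨EY n ((m - 3*n - 2)/2) (by omega), by rw [elab_EY]; omega⟩
    · rw [Nat.odd_iff] at ho
      exact ⟨EX n ((m - 3*n - 1)/2) (by omega), by rw [elab_EX]; omega⟩
  · exact ⟨ER n (3*n - m) (by omega), by rw [elab_ER]; omega⟩

/-- For every `n ≥ 2` the ladder `L_n` admits a super vertex-antimagic total labeling. -/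
theorem ladder_super_VAT (n : ℕ) (hn : 2 ≤ n) :
    ∃ f : (Fin n ⊕ Fin n) ⊕ (ladder n).edgeSet → ℕ,
      Set.BijOn f Set.univ (Set.Icc 1 (5 * n - 2)) ∧
      Set.BijOn (fun v => f (inl v)) Set.univ (Set.Icc 1 (2 * n)) ∧
      Function.Injective (vertexWt (ladder n) f) := by
  refine ⟨F n, ⟨?_, ?_, ?_⟩, ⟨?_, ?_, ?_⟩, wt_inj n hn⟩
  · rintro (v | e) -
    · have := lab_bounds n v
      exact Set.mem_Icc.2 ⟨this.1, by show lab n v ≤ _; omega⟩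
    · have := elab_bounds n hn e
      exact Set.mem_Icc.2 ⟨by show 1 ≤ elab' n _; omega, this.2⟩
  · rintro (v | e) - (w | e') - h
    · exact congrArg inl (lab_inj n v w h)
    · have h1 := lab_bounds n v
      have h2 := elab_bounds n hn e'
      have : lab n v = elab' n (e' : Sym2 (Fin n ⊕ Fin n)) := h
      omega
    · have h1 := lab_bounds n w
      have h2 := elab_bounds n hn e
      have : elab' n (e : Sym2 (Fin n ⊕ Fin n)) = lab n w := h
      omega
    · exact congrArg inr (elab_inj n hn e e' h)
  · intro m hm
    rw [Set.mem_Icc] at hm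
    rcases Nat.lt_or_ge (2*n) m with h3 | h3
    · obtain ⟨e, he⟩ := elab_surj n hn m (by omega) hm.2
      exact ⟨inr e, trivial, he⟩
    · obtain ⟨v, hv⟩ := lab_surj n m hm.1 h3
      exact ⟨inl v, trivial, hv⟩
  · rintro v -
    have := lab_bounds n v
    exact Set.mem_Icc.2 ⟨this.1, this.2⟩
  · rintro v - w - h
    exact lab_inj n v w h
  · intro m hm
    rw [Set.mem_Icc] at hm
    obtain ⟨v, hv⟩ := lab_surj n m hm.1 hm.2
    exact ⟨v, trivial, hv⟩
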